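/- A group G is quasinilpotent if and only if G/Z_∞(G) is semisimple, where Z_∞(G) is the hypercenter of G. -/

import Mathlib

set_option maxHeartbeats 1000000

/-! ## Basic framework: classes of finite groups -/

/-- A class of finite groups. -/
def GroupClass : Type 1 := ∀ (G : Type) [Group G] [Finite G], Prop

/-- Containment of classes of groups. -/
def ClassLE (X Y : GroupClass) : Prop := ∀ (G : Type) [Group G] [Finite G], X G → Y G

/-- A formation: a class of groups closed under homomorphic images and
subdirect products (i.e. `G/(M ⊓ N) ∈ X` whenever `G/M, G/N ∈ X`). -/
structure IsFormation (X : GroupClass) : Prop where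
  image : ∀ (G : Type) [Group G] [Finite G] (H : Type) [Group H] [Finite H]
    (f : G →* H), Function.Surjective f → X G → X H
  inter : ∀ (G : Type) [Group G] [Finite G] (M N : Subgroup G)
    (_ : M.Normal) (_ : N.Normal),
    X (G ⧸ M) → X (G ⧸ N) → X (G ⧸ (M ⊓ N))

/-- `X` contains all (finite) nilpotent groups. -/
def ContainsNilpotents (X : GroupClass) : Prop :=
  ∀ (G : Type) [Group G] [Finite G], Group.IsNilpotent G → X G

/-- `X` is closed under subgroups. -/
def Hereditary (X : GroupClass) : Prop :=
  ∀ (G : Type) [Group G] [Finite G] (H : Subgroup G), X G → X H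

/-- `X` is closed under normal subgroups. -/
def NormallyHereditary (X : GroupClass) : Prop :=
  ∀ (G : Type) [Group G] [Finite G] (H : Subgroup G), H.Normal → X G → X H

/-- `X` is saturated: `G/Φ(G) ∈ X` implies `G ∈ X`. -/
def Saturated (X : GroupClass) : Prop :=
  ∀ (G : Type) [Group G] [Finite G], X (G ⧸ frattini G) → X G

/-! ## Joins of normal subgroups -/

theorem normal_iSup_of_normal {G : Type} [Group G] {ι : Sort*} (S : ι → Subgroup G)
    (h : ∀ i, (S i).Normal) : (⨆ i, S i).Normal := by
  constructor
  intro n hn g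
  refine Subgroup.iSup_induction S (C := fun x => g * x * g⁻¹ ∈ ⨆ i, S i) hn ?_ ?_ ?_
  · intro i x hx
    exact Subgroup.mem_iSup_of_mem i ((h i).conj_mem x hx g)
  · simpa using Subgroup.one_mem (⨆ i, S i)
  · intro x y hx hy
    have hm := Subgroup.mul_mem _ hx hy
    have : g * (x * y) * g⁻¹ = (g * x * g⁻¹) * (g * y * g⁻¹) := by group
    rw [this]; exact hm

theorem normal_sInf_of_normal {G : Type} [Group G] (S : Set (Subgroup G))
    (h : ∀ N ∈ S, N.Normal) : (sInf S).Normal := by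
  constructor
  intro n hn g
  rw [Subgroup.mem_sInf] at hn ⊢
  exact fun N hN => (h N hN).conj_mem n (hn N hN) g

/-! ## Radicals and residuals -/

/-- The soluble radical: the join of all soluble normal subgroups. -/
def solubleRadical (G : Type) [Group G] : Subgroup G :=
  ⨆ N : {N : Subgroup G // N.Normal ∧ IsSolvable N}, (N : Subgroup G)

instance solubleRadical_normal (G : Type) [Group G] : (solubleRadical G).Normal :=
  normal_iSup_of_normal _ fun N => N.2.1

/-- `O_p(G)`: the join of all normal `p`-subgroups. -/
def pCore' (p : ℕ) (G : Type) [Group G] : Subgroup G :=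
  ⨆ N : {N : Subgroup G // N.Normal ∧ IsPGroup p N}, (N : Subgroup G)

instance pCore'_normal (p : ℕ) (G : Type) [Group G] : (pCore' p G).Normal :=
  normal_iSup_of_normal _ fun N => N.2.1

/-- The Fitting subgroup: the join of all nilpotent normal subgroups. -/
def fittingSubgroup (G : Type) [Group G] : Subgroup G :=
  ⨆ N : {N : Subgroup G // N.Normal ∧ Group.IsNilpotent N}, (N : Subgroup G)

instance fittingSubgroup_normal (G : Type) [Group G] : (fittingSubgroup G).Normal :=
  normal_iSup_of_normal _ fun N => N.2.1

/-- The class `N_p X = (G : G/O_p(G) ∈ X)`. -/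
def NpMem (p : ℕ) (X : GroupClass) (G : Type) [Group G] [Finite G] : Prop :=
  X (G ⧸ pCore' p G)

def Np (p : ℕ) (X : GroupClass) : GroupClass := fun G g f => @NpMem p X G g f

/-- The `X`-residual `G^X`: the intersection of all normal subgroups with quotient in `X`. -/
def XResidual (X : GroupClass) (G : Type) [Group G] [Finite G] : Subgroup G :=
  sInf {N : Subgroup G | ∃ h : N.Normal, letI := h; X (G ⧸ N)}

instance XResidual_normal (X : GroupClass) (G : Type) [Group G] [Finite G] :
    (XResidual X G).Normal :=
  normal_sInf_of_normal _ fun _ hN => hN.choose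

/-- The class of all (finite) soluble groups. -/
def SolubleClass : GroupClass := fun G g _ => @IsSolvable G g

/-! ## Chief factors -/

/-- `H/K` is a chief factor of `G`: both are normal in `G`, `K < H`, and there is
no normal subgroup of `G` strictly between `K` and `H`. -/
structure IsChiefFactor (G : Type) [Group G] (H K : Subgroup G) : Prop where
  normalH : H.Normal
  normalK : K.Normal
  lt : K < H
  isMax : ∀ L : Subgroup G, L.Normal → K ≤ L → L ≤ H → L = K ∨ L = H

/-- The chief factor `H/K`, realized as the image of `H` in `G/K`. -/
abbrev chiefFactorGroup (G : Type) [Group G] (H K : Subgroup G) [K.Normal] : Type :=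
  ↥(H.map (QuotientGroup.mk' K))

instance chiefFactorGroup_normal (G : Type) [Group G] (H K : Subgroup G)
    [hH : H.Normal] [K.Normal] : (H.map (QuotientGroup.mk' K)).Normal :=
  hH.map _ (QuotientGroup.mk'_surjective K)

/-- The conjugation action of `G` on the chief factor `H/K`. -/
def chiefHom (G : Type) [Group G] (H K : Subgroup G) [H.Normal] [K.Normal] :
    G →* MulAut (chiefFactorGroup G H K) :=
  MulAut.conjNormal.comp (QuotientGroup.mk' K)

/-- The centralizer `C_G(H/K)` of the chief factor `H/K`, i.e. the kernel of the
conjugation action of `G` on `H/K`. -/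
def sectionCentralizer (G : Type) [Group G] (H K : Subgroup G) [H.Normal] [K.Normal] :
    Subgroup G :=
  (chiefHom G H K).ker

instance sectionCentralizer_normal (G : Type) [Group G] (H K : Subgroup G)
    [H.Normal] [K.Normal] : (sectionCentralizer G H K).Normal :=
  MonoidHom.normal_ker _

instance semidirectProduct_finite {N G : Type} [Group N] [Group G] (φ : G →* MulAut N)
    [Finite N] [Finite G] : Finite (N ⋊[φ] G) :=
  Finite.of_injective (fun x => (x.left, x.right)) (by
    rintro ⟨a1, a2⟩ ⟨b1, b2⟩ h
    simp only [Prod.mk.injEq] at h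
    simp [h.1, h.2])

/-- The semidirect product `(H/K) ⋊ (G/C_G(H/K))` with respect to the conjugation action. -/
abbrev chiefSemidirect (G : Type) [Group G] (H K : Subgroup G) [H.Normal] [K.Normal] : Type :=
  (chiefFactorGroup G H K) ⋊[QuotientGroup.kerLift (chiefHom G H K)]
    (G ⧸ sectionCentralizer G H K)

instance chiefSemidirect_group (G : Type) [Group G] (H K : Subgroup G) [H.Normal] [K.Normal] :
    Group (chiefSemidirect G H K) :=
  SemidirectProduct.instGroup

instance chiefSemidirect_finite (G : Type) [Group G] [Finite G] (H K : Subgroup G) [H.Normal]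
    [K.Normal] : Finite (chiefSemidirect G H K) :=
  semidirectProduct_finite _

/-- The chief factor `H/K` is `X`-central in `G`:
`(H/K) ⋊ G/C_G(H/K)` belongs to `X`. -/
def IsCentralIn (X : GroupClass) (G : Type) [Group G] [Finite G] (H K : Subgroup G)
    [H.Normal] [K.Normal] : Prop :=
  X (chiefSemidirect G H K)
/-! ## Sections, simple sections and composition factors -/

/-- The section `H/K` is abelian: all commutators of elements of `H` lie in `K`. -/
def IsAbelianSection (G : Type) [Group G] (H K : Subgroup G) : Prop :=
  ∀ a ∈ H, ∀ b ∈ H, a * b * a⁻¹ * b⁻¹ ∈ K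

/-- The section `H/K` is a `p`-group: every element of `H` has `p`-power order modulo `K`. -/
def IsPSection (p : ℕ) (G : Type) [Group G] (H K : Subgroup G) : Prop :=
  ∀ a ∈ H, ∃ k : ℕ, a ^ (p ^ k) ∈ K

/-- `A/B` is a simple section: `B ⊴ A` and the quotient `A/B` is a simple group
(expressed via the correspondence theorem). -/
structure SimpleSection (G : Type) [Group G] (A B : Subgroup G) : Prop where
  le : B ≤ A
  norm : ∀ a ∈ A, ∀ b ∈ B, a * b * a⁻¹ ∈ B
  ne : ¬ A ≤ B
  minimal : ∀ L : Subgroup G, B ≤ L → L ≤ A →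
    (∀ a ∈ A, ∀ l ∈ L, a * l * a⁻¹ ∈ L) → L = B ∨ L = A

/-- `A` is subnormal in `H` (via a chain of successively normal subgroups). -/
def IsSubnormalIn (G : Type) [Group G] (A H : Subgroup G) : Prop :=
  ∃ (n : ℕ) (c : Fin (n + 1) → Subgroup G), c 0 = A ∧ c (Fin.last n) = H ∧
    ∀ i : Fin n, c i.castSucc ≤ c i.succ ∧
      ∀ g ∈ c i.succ, ∀ a ∈ c i.castSucc, g * a * g⁻¹ ∈ c i.castSucc

/-- `A/B` is a composition factor of the section `H/K`. -/
structure IsCompFactorOf (G : Type) [Group G] (H K A B : Subgroup G) : Prop where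
  hKB : K ≤ B
  hAH : A ≤ H
  subnormal : IsSubnormalIn G A H
  simple : SimpleSection G A B

/-- `x` fixes the section `A/B` (it normalizes both `A` and `B`). -/
def FixesSection {G : Type} [Group G] (x : G) (A B : Subgroup G) : Prop :=
  (∀ c : G, c ∈ A ↔ x * c * x⁻¹ ∈ A) ∧ (∀ c : G, c ∈ B ↔ x * c * x⁻¹ ∈ B)

/-- `x` induces an inner automorphism on the section `A/B`: conjugation by `x`
agrees modulo `B` with conjugation by some element `a ∈ A`. -/
def InducesInnerOn {G : Type} [Group G] (x : G) (A B : Subgroup G) : Prop :=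
  ∃ a ∈ A, ∀ c ∈ A, (x * c * x⁻¹) * (a * c * a⁻¹)⁻¹ ∈ B

/-- `(B.subgroupOf A)` is normal whenever `A` normalizes `B`. -/
theorem sectionNormal {G : Type} [Group G] {A B : Subgroup G}
    (h : ∀ a ∈ A, ∀ b ∈ B, a * b * a⁻¹ ∈ B) : (B.subgroupOf A).Normal := by
  constructor
  intro n hn g
  have := h g g.2 n (by simpa [Subgroup.mem_subgroupOf] using hn)
  simpa [Subgroup.mem_subgroupOf] using this

/-- The statement `A/B ∈ X` for a section `B ⊴ A` of `G`. -/
def XHoldsOfSection (X : GroupClass) {G : Type} [Group G] [Finite G] (A B : Subgroup G)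
    (h : ∀ a ∈ A, ∀ b ∈ B, a * b * a⁻¹ ∈ B) : Prop :=
  letI := sectionNormal h
  X (↥A ⧸ B.subgroupOf A)

/-- The class `E X` of groups all of whose composition factors lie in `X`. -/
def EClassMem (X : GroupClass) (G : Type) [Group G] [Finite G] : Prop :=
  ∀ A B : Subgroup G, IsSubnormalIn G A ⊤ → ∀ h : SimpleSection G A B,
    XHoldsOfSection X A B h.norm

def EClass (X : GroupClass) : GroupClass := fun G g f => @EClassMem X G g f

/-! ## Generalized rank functions -/

/-- `Q` is a direct product of `n` copies of some simple group. -/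
def IsProdOfSimple (Q : Type) [Group Q] (n : ℕ) : Prop :=
  ∃ (S : Type) (hS : Group S), letI := hS; IsSimpleGroup S ∧ Nonempty (Q ≃* (Fin n → S))

/-- The rank of `Q` (the number of simple direct factors of `Q`), via choice. -/
noncomputable def grank (Q : Type) [Group Q] : ℕ :=
  Classical.epsilon (IsProdOfSimple Q)

/-- A generalized rank function: it assigns to each (simple) group a pair of disjoint
sets of natural numbers, and takes the same value on all direct products of copies of
a fixed simple group. -/
structure GenRankFun : Type 1 where
  A : ∀ (S : Type) [Group S], Set ℕ
  B : ∀ (S : Type) [Group S], Set ℕ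
  disj : ∀ (S : Type) [Group S] [Finite S], IsSimpleGroup S → Disjoint (A S) (B S)
  congr : ∀ (S : Type) [Group S] [Finite S], IsSimpleGroup S → ∀ (n : ℕ), 0 < n →
    ∀ (Q : Type) [Group Q] [Finite Q], Nonempty (Q ≃* (Fin n → S)) → A Q = A S ∧ B Q = B S

/-- `R` is a good generalized rank function. -/
def GoodGRF (R : GenRankFun) : Prop :=
  ∀ (S : Type) [Group S] [Finite S], IsSimpleGroup S →
    (∀ a ∈ R.A S, ∀ b : ℕ, 0 < b → b ∣ a → b ∈ R.A S) ∧
    (∀ a ∈ R.B S, ∀ b : ℕ, 0 < b → b ∣ a → b ∈ R.A S ∪ R.B S)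

/-- `R` is a very good generalized rank function. -/
def VeryGoodGRF (R : GenRankFun) : Prop :=
  ∀ (S : Type) [Group S] [Finite S], IsSimpleGroup S →
    (∀ a ∈ R.A S, ∀ b : ℕ, 0 < b → b ≤ a → b ∈ R.A S) ∧
    (∀ a ∈ R.B S, ∀ b : ℕ, 0 < b → b ≤ a → b ∈ R.B S)

/-- The generalized rank of the chief factor `H/K` of `G` lies in `R(H/K)`:
`gr(H/K, G) ∈ R(H/K)`. -/
def GRSat (R : GenRankFun) (G : Type) [Group G] (H K : Subgroup G) [K.Normal] : Prop :=
  grank (chiefFactorGroup G H K) ∈ R.A (chiefFactorGroup G H K) ∨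
  (grank (chiefFactorGroup G H K) ∈ R.B (chiefFactorGroup G H K) ∧
    ∀ (x : G) (A B : Subgroup G), IsCompFactorOf G H K A B → FixesSection x A B →
      InducesInnerOn x A B)

/-! ## The class `X(R)` -/

/-- Membership in the class `X(R)`: every `X`-eccentric chief factor `H/K` of `G`
satisfies `H/K ∉ X` and `gr(H/K, G) ∈ R(H/K)`. -/
def ClassRMem (X : GroupClass) (R : GenRankFun) (G : Type) [Group G] [Finite G] : Prop :=
  ∀ H K : Subgroup G, ∀ h : IsChiefFactor G H K,
    letI := h.normalH; letI := h.normalK;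
    ¬ IsCentralIn X G H K →
      (¬ X (chiefFactorGroup G H K) ∧ GRSat R G H K)

def ClassR (X : GroupClass) (R : GenRankFun) : GroupClass :=
  fun G g f => @ClassRMem X R G g f

/-! ## Quasi-`X`-groups -/

/-- `G` is a quasi-`X`-group: every element of `G` induces an inner automorphism on
every `X`-eccentric chief factor of `G`. -/
def QuasiMem (X : GroupClass) (G : Type) [Group G] [Finite G] : Prop :=
  ∀ H K : Subgroup G, ∀ h : IsChiefFactor G H K,
    letI := h.normalH; letI := h.normalK;
    ¬ IsCentralIn X G H K → ∀ x : G, InducesInnerOn x H K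

def QuasiClass (X : GroupClass) : GroupClass := fun G g f => @QuasiMem X G g f

/-! ## Hypercenter and the intersection of maximal `X`-subgroups -/

/-- The `X`-hypercenter of `G`: the largest normal subgroup of `G` all chief factors
of `G` below which are `X`-central. -/
def XHypercenter (X : GroupClass) (G : Type) [Group G] [Finite G] : Subgroup G :=
  ⨆ Z : {Z : Subgroup G // Z.Normal ∧ ∀ H K : Subgroup G, ∀ h : IsChiefFactor G H K,
      H ≤ Z → letI := h.normalH; letI := h.normalK; IsCentralIn X G H K},
    (Z : Subgroup G)

instance XHypercenter_normal (X : GroupClass) (G : Type) [Group G] [Finite G] :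
    (XHypercenter X G).Normal :=
  normal_iSup_of_normal _ fun Z => Z.2.1

/-- `U` is an `X`-maximal subgroup of `G`. -/
def IsXMaximal (X : GroupClass) (G : Type) [Group G] [Finite G] (U : Subgroup G) : Prop :=
  X U ∧ ∀ V : Subgroup G, U ≤ V → X V → U = V

/-- `Int_X(G)`: the intersection of all `X`-maximal subgroups of `G`. -/
def XInt (X : GroupClass) (G : Type) [Group G] [Finite G] : Subgroup G :=
  sInf {U : Subgroup G | IsXMaximal X G U}

/-! ## Minimal normal subgroups and the socle -/

def IsMinimalNormal (G : Type) [Group G] (N : Subgroup G) : Prop :=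
  N.Normal ∧ N ≠ ⊥ ∧ ∀ L : Subgroup G, L.Normal → L ≤ N → L = ⊥ ∨ L = N

/-- The socle of `G`: the join of all minimal normal subgroups. -/
def socle (G : Type) [Group G] : Subgroup G :=
  ⨆ N : {N : Subgroup G // IsMinimalNormal G N}, (N : Subgroup G)

instance socle_normal (G : Type) [Group G] : (socle G).Normal :=
  normal_iSup_of_normal _ fun N => N.2.1

/-! ## Internal direct products -/

/-- `N` is the internal direct product of the family `S` of subgroups of `G`. -/
structure InternalDirectProduct (G : Type) [Group G] (N : Subgroup G) {ι : Type}
    (S : ι → Subgroup G) : Prop where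
  le : ∀ i, S i ≤ N
  sup : (⨆ i, S i) = N
  comm : ∀ i j, i ≠ j → ∀ x ∈ S i, ∀ y ∈ S j, x * y = y * x
  indep : ∀ i, Disjoint (S i) (⨆ j ∈ ({i}ᶜ : Set ι), S j)

/-- The section `Rtop/Z` is the internal direct product of the sections `W i / Z`. -/
structure SectionDirectProduct (G : Type) [Group G] (Rtop Z : Subgroup G) {ι : Type}
    (W : ι → Subgroup G) : Prop where
  le_bot : ∀ i, Z ≤ W i
  le_top : ∀ i, W i ≤ Rtop
  sup : Z ⊔ (⨆ i, W i) = Rtop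
  comm : ∀ i j, i ≠ j → ∀ x ∈ W i, ∀ y ∈ W j, x * y * x⁻¹ * y⁻¹ ∈ Z
  indep : ∀ i, W i ⊓ (Z ⊔ ⨆ j ∈ ({i}ᶜ : Set ι), W j) ≤ Z

/-- A (possibly trivial) semisimple group: the internal direct product of a family of
simple non-abelian (normal) subgroups. -/
def IsSemisimpleGroup (Q : Type) [Group Q] : Prop :=
  ∃ (ι : Type) (S : ι → Subgroup Q), InternalDirectProduct Q ⊤ S ∧
    ∀ i, IsSimpleGroup (S i) ∧ ¬ (∀ x y : (S i), x * y = y * x)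
/-! ## Composition and local definitions of formations -/

/-- `f` is a composition definition of `X`:
`X = (G : G/G_S ∈ f 0 and G/C_G(H/K) ∈ f p for every abelian p-chief factor H/K)`. -/
def DefinedByCompDef (f : ℕ → GroupClass) (X : GroupClass) : Prop :=
  ∀ (G : Type) [Group G] [Finite G],
    X G ↔ (f 0 (G ⧸ solubleRadical G) ∧
      ∀ (p : ℕ), p.Prime → ∀ H K : Subgroup G, ∀ h : IsChiefFactor G H K,
        letI := h.normalH; letI := h.normalK;
        IsAbelianSection G H K → IsPSection p G H K →
          f p (G ⧸ sectionCentralizer G H K))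

/-- `f` is the canonical composition definition of `X`:
a composition definition with `f 0 = X` and `f p = N_p (f p) ⊆ X` for all primes. -/
structure IsCanonicalCompDef (f : ℕ → GroupClass) (X : GroupClass) : Prop where
  defines : DefinedByCompDef f X
  zero : f 0 = X
  np : ∀ p : ℕ, p.Prime → Np p (f p) = f p
  le : ∀ p : ℕ, p.Prime → ClassLE (f p) X

/-- `X` is a composition (Baer-local) formation. -/
def IsCompFormation (X : GroupClass) : Prop :=
  IsFormation X ∧ ∃ f : ℕ → GroupClass, DefinedByCompDef f X

/-- `f` is a local definition of `X`:
`X = (G : G/C_G(H/K) ∈ f p for every chief factor H/K of G and every p ∣ |H/K|)`. -/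
def DefinedByLocalDef (f : ℕ → GroupClass) (X : GroupClass) : Prop :=
  ∀ (G : Type) [Group G] [Finite G],
    X G ↔ ∀ H K : Subgroup G, ∀ h : IsChiefFactor G H K, ∀ p : ℕ, p.Prime →
      letI := h.normalH; letI := h.normalK;
      p ∣ Nat.card (chiefFactorGroup G H K) →
        f p (G ⧸ sectionCentralizer G H K)

/-- `f` is the canonical local definition of `X`. -/
structure IsCanonicalLocalDef (f : ℕ → GroupClass) (X : GroupClass) : Prop where
  defines : DefinedByLocalDef f X
  np : ∀ p : ℕ, p.Prime → Np p (f p) = f p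
  le : ∀ p : ℕ, p.Prime → ClassLE (f p) X

/-- `X` is solubly saturated: `G/Φ(G_S) ∈ X` implies `G ∈ X`, where `G_S` is the
soluble radical of `G`.  (The Frattini subgroup of the soluble radical, viewed as a
subgroup of `G`, is normal in `G`; its normality is taken as a hypothesis.) -/
def SolublySaturated (X : GroupClass) : Prop :=
  ∀ (G : Type) [Group G] [Finite G] (N : Subgroup G) (hN : N.Normal),
    N = (frattini (solubleRadical G)).map (solubleRadical G).subtype →
    (letI := hN; X (G ⧸ N)) → X G

/-- `Xl` is the greatest saturated subformation of `X`. -/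
def IsGreatestSaturatedSubformation (X Xl : GroupClass) : Prop :=
  (IsFormation Xl ∧ Saturated Xl ∧ (∃ (G : Type) (g : Group G) (f : Finite G), Xl G)
    ∧ ClassLE Xl X) ∧
  ∀ Y : GroupClass, IsFormation Y → Saturated Y →
    (∃ (G : Type) (g : Group G) (f : Finite G), Y G) → ClassLE Y X → ClassLE Y Xl

/-! ## Outer automorphism groups and wreath products -/

instance mulAut_finite (S : Type) [Group S] [Finite S] : Finite (MulAut S) :=
  Finite.of_injective (fun e => (e : S → S)) (by
    intro a b h
    ext x
    exact congrFun h x)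

instance conj_range_normal (S : Type) [Group S] : (MulAut.conj (G := S)).range.Normal := by
  constructor
  rintro x ⟨g, rfl⟩ φ
  refine ⟨φ g, ?_⟩
  ext s
  show φ g * s * (φ g)⁻¹ = φ (g * φ⁻¹ s * g⁻¹)
  rw [map_mul, map_mul, map_inv]
  simp

/-- The outer automorphism group `Out S = Aut S / Inn S`. -/
abbrev OutGroup (S : Type) [Group S] : Type :=
  MulAut S ⧸ (MulAut.conj (G := S)).range

/-- The permutation action of `Perm (Fin n)` on `Fin n → H`. -/
def permMulAut (H : Type) [Group H] (n : ℕ) : Equiv.Perm (Fin n) →* MulAut (Fin n → H) where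
  toFun σ :=
    { toFun := fun f => f ∘ σ.symm
      invFun := fun f => f ∘ σ
      left_inv := fun f => by funext i; simp
      right_inv := fun f => by funext i; simp
      map_mul' := fun f g => rfl }
  map_one' := by
    apply MulEquiv.ext; intro f; rfl
  map_mul' := by
    intro σ τ
    apply MulEquiv.ext; intro f
    funext i
    rfl

/-- The natural wreath product `H ≀ S_n`. -/
abbrev WreathSym (H : Type) [Group H] (n : ℕ) : Type :=
  (Fin n → H) ⋊[permMulAut H n] Equiv.Perm (Fin n)

/-! ## Hypercenter (nilpotent case) -/

/-- The hypercenter `Z_∞(G)`: the join of the upper central series. -/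
def hypercenter (G : Type) [Group G] : Subgroup G :=
  ⨆ n : ℕ, upperCentralSeries G n

instance hypercenter_normal (G : Type) [Group G] : (hypercenter G).Normal :=
  normal_iSup_of_normal _ fun n =>
    show (Subgroup.upperCentralSeries G n).Normal from Subgroup.normal_of_characteristic _

/-- The class of finite nilpotent groups. -/
def NilpotentClass : GroupClass := fun G g _ => @Group.IsNilpotent G g


/-! ## Further constructions -/

/-- `Z(G, R, X, n)`: the greatest normal subgroup of `G` such that every
`G`-composition factor `H/K` below it which is `X`-eccentric in `G` satisfies
`H/K ∉ X`, `r(H/K, G) > n` and `gr(H/K, G) ∈ R(H/K)`. -/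
def ZRFn (X : GroupClass) (R : GenRankFun) (n : ℕ) (G : Type) [Group G] [Finite G] :
    Subgroup G :=
  ⨆ Z : {Z : Subgroup G // Z.Normal ∧ ∀ H K : Subgroup G, ∀ h : IsChiefFactor G H K,
      H ≤ Z → letI := h.normalH; letI := h.normalK;
      ¬ IsCentralIn X G H K →
        (¬ X (chiefFactorGroup G H K) ∧ n < grank (chiefFactorGroup G H K) ∧
          GRSat R G H K)},
    (Z : Subgroup G)

instance ZRFn_normal (X : GroupClass) (R : GenRankFun) (n : ℕ) (G : Type) [Group G]
    [Finite G] : (ZRFn X R n G).Normal :=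
  normal_iSup_of_normal _ fun Z => Z.2.1

/-- The `X`-radical of `G`: the join of all normal `X`-subgroups. -/
def XRadical (X : GroupClass) (G : Type) [Group G] [Finite G] : Subgroup G :=
  ⨆ N : {N : Subgroup G // N.Normal ∧ X N}, (N : Subgroup G)

/-- The symmetric group `S_{n+1}` has a simple section not belonging to `X`. -/
def HasBadSection (X : GroupClass) (n : ℕ) : Prop :=
  ∃ A B : Subgroup (Equiv.Perm (Fin (n + 1))), ∃ h : SimpleSection _ A B,
    ¬ XHoldsOfSection X A B h.norm

/-- The center of a subgroup `D`, viewed as a subgroup of the ambient group. -/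
def centerSubgroup {G : Type} [Group G] (D : Subgroup G) : Subgroup G :=
  (Subgroup.center D).map D.subtype

/-- `G` is `c`-supersoluble: every chief factor of `G` is a simple group. -/
def CSupersolubleMem (G : Type) [Group G] [Finite G] : Prop :=
  ∀ H K : Subgroup G, IsChiefFactor G H K → SimpleSection G H K

def CSupersoluble : GroupClass := fun G g f => @CSupersolubleMem G g f

/-- The class `A(m)` of abelian groups of exponent dividing `m`. -/
def AbelianExpClass (m : ℕ) : GroupClass := fun G _g _f =>
  (∀ a b : G, a * b = b * a) ∧ ∀ x : G, x ^ m = 1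

/-- `G` is supersoluble: it has a normal series with cyclic factors. -/
def SupersolubleMem (G : Type) [Group G] [Finite G] : Prop :=
  ∃ (n : ℕ) (c : Fin (n + 1) → Subgroup G), c 0 = ⊥ ∧ c (Fin.last n) = ⊤ ∧
    ∀ i : Fin n, c i.castSucc ≤ c i.succ ∧ (c i.castSucc).Normal ∧
      ∃ x ∈ c i.succ, ∀ y ∈ c i.succ, ∃ k : ℤ, y * (x ^ k)⁻¹ ∈ c i.castSucc

def Supersoluble : GroupClass := fun G g f => @SupersolubleMem G g f

/-- `G` is quasinilpotent: for every chief factor `H/K` of `G` which is not central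
(i.e. `H/K ≰ Z(G/K)`), every element of `G` induces an inner automorphism on it. -/
def QuasinilpotentMem (G : Type) [Group G] [Finite G] : Prop :=
  ∀ H K : Subgroup G, IsChiefFactor G H K →
    ¬ (∀ h ∈ H, ∀ g : G, g * h * g⁻¹ * h⁻¹ ∈ K) →
    ∀ x : G, InducesInnerOn x H K

/-- Membership in the class `X_{ca}`: abelian chief factors are `X`-central,
non-abelian chief factors are simple. -/
def CaMem (X : GroupClass) (G : Type) [Group G] [Finite G] : Prop :=
  ∀ H K : Subgroup G, ∀ h : IsChiefFactor G H K,
    letI := h.normalH; letI := h.normalK;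
    (IsAbelianSection G H K → IsCentralIn X G H K) ∧
    (¬ IsAbelianSection G H K → SimpleSection G H K)

/-- `H` is `s`-critical for `X`: `H ∉ X` but all proper subgroups of `H` are in `X`. -/
def SCritical (X : GroupClass) (H : Type) [Group H] [Finite H] : Prop :=
  ¬ X H ∧ ∀ U : Subgroup H, U ≠ ⊤ → X U

/-- `F̃(G)`, defined by `F̃(G)/Φ(G) = Soc(G/Φ(G))`. -/
def ftilde (G : Type) [Group G] : Subgroup G :=
  (socle (G ⧸ frattini G)).comap (QuotientGroup.mk' (frattini G))

/-- The simple group `S` belongs to the class `H` of Theorem 3: every `X`-central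
chief factor (of any group) which is a direct product of copies of `S` is `Xl`-central. -/
def HClassMem (X Xl : GroupClass) (S : Type) [Group S] : Prop :=
  IsSimpleGroup S ∧
  ∀ (G : Type) [Group G] [Finite G] (H K : Subgroup G) (h : IsChiefFactor G H K) (n : ℕ),
    0 < n →
    (letI := h.normalH; letI := h.normalK;
      Nonempty (chiefFactorGroup G H K ≃* (Fin n → S)) →
      IsCentralIn X G H K → IsCentralIn Xl G H K)
-- Aux batch 1
section MyAux
open Subgroup

variable {G : Type} [Group G]

/-- decomposition in a sup with a normal left factor -/
theorem my_mem_sup_normal (N X : Subgroup G) [N.Normal] {y : G} (hy : y ∈ N ⊔ X) :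
    ∃ a ∈ N, ∃ z ∈ X, y = a * z := by
  have : y ∈ ((N ⊔ X : Subgroup G) : Set G) := hy
  rw [Subgroup.normal_mul] at this
  obtain ⟨a, ha, z, hz, hzy⟩ := this
  exact ⟨a, ha, z, hz, hzy.symm⟩

theorem my_ucs_stab {n : ℕ} (h : Subgroup.upperCentralSeries G (n+1) = Subgroup.upperCentralSeries G n) :
    ∀ m, n ≤ m → Subgroup.upperCentralSeries G m = Subgroup.upperCentralSeries G n := by
  intro m hm
  induction m with
  | zero => simpa [Nat.le_zero.mp hm] using rfl
  | succ k ih =>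
    rcases Nat.lt_or_ge n (k+1) with hlt | hge
    · have hk : n ≤ k := Nat.lt_succ_iff.mp hlt
      have hke := ih hk
      ext x
      rw [Subgroup.mem_upperCentralSeries_succ_iff, ← h, Subgroup.mem_upperCentralSeries_succ_iff]
      exact forall_congr' fun y => by rw [hke]
    · have hnk : n = k + 1 := le_antisymm hm hge
      rw [hnk]

theorem my_exists_hypercenter_eq (G : Type) [Group G] [Finite G] :
    ∃ n, hypercenter G = Subgroup.upperCentralSeries G n ∧
      Subgroup.upperCentralSeries G (n+1) = Subgroup.upperCentralSeries G n := by
  -- find n with card stabilizing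
  have hb : ∀ m, Nat.card (Subgroup.upperCentralSeries G m) ≤ Nat.card G := fun m => by
    calc Nat.card (Subgroup.upperCentralSeries G m) ≤ Nat.card (⊤ : Subgroup G) :=
        Subgroup.card_le_of_le le_top
      _ = Nat.card G := Subgroup.card_top
  have hex : ∃ n, Subgroup.upperCentralSeries G (n+1) = Subgroup.upperCentralSeries G n := by
    by_contra hcon
    push_neg at hcon
    have hsm : StrictMono (fun m => Nat.card (Subgroup.upperCentralSeries G m)) := by
      apply strictMono_nat_of_lt_succ
      intro m
      have hle := Subgroup.upperCentralSeries_mono G (Nat.le_succ m)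
      have hlt : Nat.card (Subgroup.upperCentralSeries G m) ≠ Nat.card (Subgroup.upperCentralSeries G (m+1)) := by
        intro he
        exact hcon m (Subgroup.eq_of_le_of_card_ge hle he.ge).symm
      exact lt_of_le_of_ne (Subgroup.card_le_of_le hle) hlt
    have h1 : Nat.card G + 1 ≤ Nat.card (Subgroup.upperCentralSeries G (Nat.card G + 1)) :=
      hsm.le_apply
    have h2 := hb (Nat.card G + 1)
    omega
  obtain ⟨n, hn⟩ := hex
  refine ⟨n, ?_, hn⟩
  apply le_antisymm
  · apply iSup_le
    intro k
    rcases Nat.le_total k n with hk | hk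
    · exact Subgroup.upperCentralSeries_mono G hk
    · exact (my_ucs_stab hn k hk).le
  · exact le_iSup (Subgroup.upperCentralSeries G) n

theorem my_center_le_hypercenter (G : Type) [Group G] :
    Subgroup.center G ≤ hypercenter G := by
  have := le_iSup (Subgroup.upperCentralSeries G) 1
  rwa [Subgroup.upperCentralSeries_one] at this

theorem my_hypercenter_quotient (G : Type) [Group G] [Finite G] :
    hypercenter (G ⧸ hypercenter G) = ⊥ := by
  obtain ⟨n, hZ, hstab⟩ := my_exists_hypercenter_eq G
  set Z := hypercenter G with hZdef
  -- key : commutators into Z force membership in Z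
  have key : ∀ x : G, (∀ y : G, x * y * x⁻¹ * y⁻¹ ∈ Z) → x ∈ Z := by
    intro x hx
    have : x ∈ Subgroup.upperCentralSeries G (n+1) := by
      rw [Subgroup.mem_upperCentralSeries_succ_iff]
      intro y
      have := hx y
      rwa [hZ] at this
    rw [hZ, ← hstab]
    exact this
  have hall : ∀ m, Subgroup.upperCentralSeries (G ⧸ Z) m = ⊥ := by
    intro m
    induction m with
    | zero => rfl
    | succ k ih =>
      apply le_antisymm _ bot_le
      intro xq hxq
      rw [Subgroup.mem_upperCentralSeries_succ_iff] at hxq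
      induction xq using QuotientGroup.induction_on with
      | H x =>
        have hx : ∀ y : G, x * y * x⁻¹ * y⁻¹ ∈ Z := by
          intro y
          have := hxq (QuotientGroup.mk y)
          rw [ih, Subgroup.mem_bot] at this
          have h1 : (QuotientGroup.mk (x * y * x⁻¹ * y⁻¹) : G ⧸ Z) = 1 := by
            simpa [commutatorElement_def] using this
          rwa [QuotientGroup.eq_one_iff] at h1
        have := key x hx
        simpa [Subgroup.mem_bot, QuotientGroup.eq_one_iff] using this
  show (⨆ m, Subgroup.upperCentralSeries (G ⧸ Z) m) = ⊥
  rw [iSup_eq_bot]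
  exact hall
end MyAux
-- Aux batch 2
section MyAux2
open Subgroup

variable {G : Type} [Group G]

/-- chief factors inside the hypercenter are central -/
theorem my_central_of_le_hyper [Finite G] {H K : Subgroup G}
    (hcf : IsChiefFactor G H K) (hle : H ≤ K ⊔ hypercenter G) :
    ∀ h ∈ H, ∀ g : G, g * h * g⁻¹ * h⁻¹ ∈ K := by
  classical
  haveI := hcf.normalH
  haveI := hcf.normalK
  haveI : (hypercenter G).Normal := hypercenter_normal G
  obtain ⟨n, hZ, _⟩ := my_exists_hypercenter_eq G
  set M : ℕ → Subgroup G := fun j => K ⊔ (H ⊓ Subgroup.upperCentralSeries G j) with hM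
  haveI hMnorm : ∀ j, (M j).Normal := fun j => by
    haveI := (inferInstance : (Subgroup.upperCentralSeries G j).Normal)
    exact Subgroup.sup_normal K _
  have hKM : ∀ j, K ≤ M j := fun j => le_sup_left
  have hMH : ∀ j, M j ≤ H := fun j => sup_le hcf.lt.le inf_le_left
  have hdich : ∀ j, M j = K ∨ M j = H := fun j =>
    hcf.isMax (M j) (hMnorm j) (hKM j) (hMH j)
  have hMn : M n = H := by
    apply le_antisymm (hMH n)
    intro h hh
    have hmem : h ∈ hypercenter G ⊔ K := by
      rw [sup_comm]; exact hle hh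
    obtain ⟨z, hz, k, hk, rfl⟩ := my_mem_sup_normal (hypercenter G) K hmem
    have hzH : z ∈ H := by
      have : (z * k) * k⁻¹ ∈ H := mul_mem hh (inv_mem (hcf.lt.le hk))
      simpa using this
    exact mul_mem
      (le_sup_right (a := K) ⟨hzH, by rw [← hZ]; exact hz⟩)
      (le_sup_left (a := K) hk)
  have hM0 : M 0 = K := by
    simp [hM, Subgroup.upperCentralSeries_zero]
  have hexists : ∃ j, M j = H := ⟨n, hMn⟩
  set j0 := Nat.find hexists with hj0
  have hj0spec : M j0 = H := Nat.find_spec hexists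
  have hj0pos : j0 ≠ 0 := by
    intro h0
    rw [h0, hM0] at hj0spec
    exact hcf.lt.ne hj0spec
  set j := j0 - 1 with hjdef
  have hjlt : j < j0 := Nat.sub_lt (Nat.pos_of_ne_zero hj0pos) one_pos
  have hMj : M j = K := by
    rcases hdich j with h | h
    · exact h
    · exact absurd h (Nat.find_min hexists hjlt)
  have hjsucc : j + 1 = j0 := Nat.succ_pred_eq_of_pos (Nat.pos_of_ne_zero hj0pos)
  have hMj1 : M (j+1) = H := by rw [hjsucc]; exact hj0spec
  -- now the computation
  intro h hh g
  have hh' : h ∈ K ⊔ (H ⊓ Subgroup.upperCentralSeries G (j+1)) := by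
    have hthis : h ∈ M (j+1) := by rw [hMj1]; exact hh
    exact hthis
  haveI : (H ⊓ Subgroup.upperCentralSeries G (j+1)).Normal := by
    haveI := (inferInstance : (Subgroup.upperCentralSeries G (j+1)).Normal)
    infer_instance
  rw [sup_comm] at hh'
  obtain ⟨u, hu, k, hk, rfl⟩ := my_mem_sup_normal _ K hh'
  -- h = u * k with u ∈ H ⊓ Z_{j+1}, k ∈ K  (note order: normal factor first)
  have hcomm : g * (u * k) * g⁻¹ * (u * k)⁻¹ =
      (g * u * g⁻¹ * u⁻¹) * (u * (g * k * g⁻¹ * k⁻¹) * u⁻¹) := by group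
  rw [hcomm]
  apply mul_mem
  · -- g u g⁻¹ u⁻¹ ∈ H ⊓ Z_j ≤ M j = K
    have huZ : u ∈ Subgroup.upperCentralSeries G (j+1) := hu.2
    rw [Subgroup.mem_upperCentralSeries_succ_iff] at huZ
    have h1 : u * g⁻¹ * u⁻¹ * g ∈ Subgroup.upperCentralSeries G j := by
      simpa [commutatorElement_def] using huZ g⁻¹
    have h2 : g * (u * g⁻¹ * u⁻¹ * g) * g⁻¹ ∈ Subgroup.upperCentralSeries G j :=
      ((inferInstance : (Subgroup.upperCentralSeries G j).Normal)).conj_mem _ h1 g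
    have h3 : g * u * g⁻¹ * u⁻¹ ∈ Subgroup.upperCentralSeries G j := by
      have : g * (u * g⁻¹ * u⁻¹ * g) * g⁻¹ = g * u * g⁻¹ * u⁻¹ := by group
      rwa [this] at h2
    have h4 : g * u * g⁻¹ * u⁻¹ ∈ H :=
      mul_mem (hcf.normalH.conj_mem u hu.1 g) (inv_mem hu.1)
    have h5 : g * u * g⁻¹ * u⁻¹ ∈ M j := le_sup_right (a := K) ⟨h4, h3⟩
    rwa [hMj] at h5
  · have hk1 : g * k * g⁻¹ * k⁻¹ ∈ K :=
      mul_mem (hcf.normalK.conj_mem k hk g) (inv_mem hk)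
    exact hcf.normalK.conj_mem _ hk1 u
end MyAux2
-- Aux batch 3 : semisimple machinery and the ⇐ direction
section MyAux3
open Subgroup

variable {Q : Type} [Group Q]

theorem my_factor_normal {ι : Type} {S : ι → Subgroup Q}
    (hp : InternalDirectProduct Q ⊤ S) (i : ι) : (S i).Normal := by
  rw [← Subgroup.normalizer_eq_top_iff]
  apply le_antisymm le_top
  rw [← hp.sup]
  apply iSup_le
  intro j
  rcases eq_or_ne j i with rfl | hne
  · exact Subgroup.le_normalizer
  · intro x hx
    rw [Subgroup.mem_normalizer_iff]
    intro h
    constructor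
    · intro hh
      have hc := hp.comm j i hne x hx h hh
      have e : x * h * x⁻¹ = h := by rw [hc]; group
      rw [e]; exact hh
    · intro hh
      have hc := hp.comm j i hne x⁻¹ (inv_mem hx) (x * h * x⁻¹) hh
      have e : h = x * h * x⁻¹ := by
        have h2 := congrArg (fun t => t * x) hc
        simpa [mul_assoc] using h2
      rw [e]; exact hh

/-- In a semisimple group, conjugation on any normal subgroup is inner. -/
theorem my_conj_inner_of_semisimple (hQ : IsSemisimpleGroup Q)
    (M : Subgroup Q) (hM : M.Normal) (q : Q) :
    ∃ m ∈ M, ∀ u ∈ M, q * u * q⁻¹ = m * u * m⁻¹ := by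
  obtain ⟨ι, S, hp, hsim⟩ := hQ
  set W : Subgroup Q :=
    { carrier := {q | ∃ m ∈ M, ∀ u ∈ M, q * u * q⁻¹ = m * u * m⁻¹}
      one_mem' := ⟨1, one_mem M, fun u _ => by group⟩
      mul_mem' := by
        rintro a b ⟨m, hm, ha⟩ ⟨m', hm', hb⟩
        refine ⟨m * m', mul_mem hm hm', fun u hu => ?_⟩
        have h1 : b * u * b⁻¹ = m' * u * m'⁻¹ := hb u hu
        have h2 : a * (m' * u * m'⁻¹) * a⁻¹ = m * (m' * u * m'⁻¹) * m⁻¹ :=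
          ha _ (hM.conj_mem u hu m')
        calc a * b * u * (a * b)⁻¹ = a * (b * u * b⁻¹) * a⁻¹ := by group
          _ = a * (m' * u * m'⁻¹) * a⁻¹ := by rw [h1]
          _ = m * (m' * u * m'⁻¹) * m⁻¹ := h2
          _ = m * m' * u * (m * m')⁻¹ := by group
      inv_mem' := by
        rintro a ⟨m, hm, ha⟩
        refine ⟨m⁻¹, inv_mem hm, fun u hu => ?_⟩
        have hu' : a⁻¹ * u * a ∈ M := by
          have := hM.conj_mem u hu a⁻¹
          simpa using this
        have h1 := ha _ hu'
        have heq : a * (a⁻¹ * u * a) * a⁻¹ = u := by group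
        rw [heq] at h1
        have h2 := congrArg (fun t => m⁻¹ * t * m) h1
        have h3 : m⁻¹ * u * m = a⁻¹ * u * a := by
          rw [h2]; group
        rw [show a⁻¹ * u * a⁻¹⁻¹ = a⁻¹ * u * a from by rw [inv_inv],
            show m⁻¹ * u * m⁻¹⁻¹ = m⁻¹ * u * m from by rw [inv_inv]]
        exact h3.symm } with hW
  have hSW : ∀ i, S i ≤ W := by
    intro i
    haveI hSin : (S i).Normal := my_factor_normal hp i
    haveI hMS : ((M.subgroupOf (S i))).Normal := by
      constructor
      rintro ⟨n, hnS⟩ hn ⟨g, hgS⟩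
      simp only [Subgroup.mem_subgroupOf] at hn ⊢
      exact hM.conj_mem n hn g
    rcases (hsim i).1.eq_bot_or_eq_top_of_normal _ hMS with hbot | htop
    · -- S i disjoint from M : S i centralizes M
      rw [Subgroup.subgroupOf_eq_bot] at hbot
      intro s hs
      refine ⟨1, one_mem M, fun u hu => ?_⟩
      have hcomm : s * u * s⁻¹ * u⁻¹ ∈ M := by
        exact mul_mem (hM.conj_mem u hu s) (inv_mem hu)
      have hcomm2 : s * u * s⁻¹ * u⁻¹ ∈ S i := by
        have h1 : u * s⁻¹ * u⁻¹ ∈ S i := hSin.conj_mem s⁻¹ (inv_mem hs) u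
        have : s * (u * s⁻¹ * u⁻¹) ∈ S i := mul_mem hs h1
        simpa [mul_assoc] using this
      have : s * u * s⁻¹ * u⁻¹ = 1 :=
        Subgroup.disjoint_def.mp hbot hcomm hcomm2
      have : s * u * s⁻¹ = u := by
        have h := congrArg (· * u) this
        simpa [mul_assoc] using h
      rw [this]; group
    · rw [Subgroup.subgroupOf_eq_top] at htop
      intro s hs
      exact ⟨s, htop hs, fun u _ => rfl⟩
  have : (⊤ : Subgroup Q) ≤ W := by
    rw [← hp.sup]
    exact iSup_le hSW
  exact this (Subgroup.mem_top q)

/-- The ⇐ direction of the theorem. -/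
theorem my_quasinilpotent_of_semisimple (G : Type) [Group G] [Finite G]
    (hss : IsSemisimpleGroup (G ⧸ hypercenter G)) : QuasinilpotentMem G := by
  intro H K hcf hnc x
  haveI := hcf.normalH
  haveI := hcf.normalK
  haveI : (hypercenter G).Normal := hypercenter_normal G
  set Z := hypercenter G with hZdef
  -- H is not below K ⊔ Z
  have hnotle : ¬ H ≤ K ⊔ Z := by
    intro hle
    exact hnc (my_central_of_le_hyper hcf hle)
  -- H ⊓ (K ⊔ Z) = K
  have hinf : H ⊓ (K ⊔ Z) = K := by
    haveI : (K ⊔ Z).Normal := Subgroup.sup_normal K Z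
    rcases hcf.isMax (H ⊓ (K ⊔ Z)) inferInstance
        (le_inf hcf.lt.le le_sup_left) inf_le_left with h | h
    · exact h
    · exfalso
      apply hnotle
      intro y hy
      have hy2 : y ∈ H ⊓ (K ⊔ Z) := by rw [h]; exact hy
      exact hy2.2
  -- pass to the quotient
  set π := QuotientGroup.mk' Z with hπ
  have hsurj : Function.Surjective π := QuotientGroup.mk'_surjective Z
  have hMnorm : (H.map π).Normal := hcf.normalH.map π hsurj
  obtain ⟨m, hm, hinner⟩ := my_conj_inner_of_semisimple hss (H.map π) hMnorm (π x)
  obtain ⟨a, ha, hpa⟩ := hm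
  refine ⟨a, ha, fun c hc => ?_⟩
  have hw : π (x * c * x⁻¹ * (a * c * a⁻¹)⁻¹) = 1 := by
    have hc' : π c ∈ H.map π := Subgroup.mem_map_of_mem π hc
    have := hinner (π c) hc'
    rw [← hpa] at this
    simp only [map_mul, map_inv]
    rw [this]
    group
  have hwZ : x * c * x⁻¹ * (a * c * a⁻¹)⁻¹ ∈ Z := by
    rwa [← QuotientGroup.ker_mk' Z, MonoidHom.mem_ker]
  have hwH : x * c * x⁻¹ * (a * c * a⁻¹)⁻¹ ∈ H := by
    apply mul_mem (hcf.normalH.conj_mem c hc x)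
    exact inv_mem (mul_mem (mul_mem ha hc) (inv_mem ha))
  have : x * c * x⁻¹ * (a * c * a⁻¹)⁻¹ ∈ H ⊓ (K ⊔ Z) :=
    ⟨hwH, (le_sup_right : Z ≤ K ⊔ Z) hwZ⟩
  rw [hinf] at this
  exact this
end MyAux3
-- Aux batch 4 : quasinilpotency passes to quotients
section MyAux4
open Subgroup

theorem my_quasinilpotent_quotient (G : Type) [Group G] [Finite G]
    (Z : Subgroup G) [hZn : Z.Normal] (hG : QuasinilpotentMem G) :
    QuasinilpotentMem (G ⧸ Z) := by
  intro H' K' hcf' hnc' x'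
  set π := QuotientGroup.mk' Z with hπ
  have hsurj : Function.Surjective π := QuotientGroup.mk'_surjective Z
  set H := H'.comap π with hH
  set K := K'.comap π with hK
  have hZH : Z ≤ K := by
    intro z hz
    show π z ∈ K'
    have : π z = 1 := by
      rw [← MonoidHom.mem_ker, QuotientGroup.ker_mk']; exact hz
    rw [this]; exact one_mem K'
  have hmapH : H.map π = H' := Subgroup.map_comap_eq_self_of_surjective hsurj H'
  have hmapK : K.map π = K' := Subgroup.map_comap_eq_self_of_surjective hsurj K'
  have hcf : IsChiefFactor G H K := by
    refine ⟨hcf'.normalH.comap π, hcf'.normalK.comap π, ?_, ?_⟩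
    · refine lt_of_le_of_ne (Subgroup.comap_mono hcf'.lt.le) ?_
      intro he
      have : K' = H' := by rw [← hmapK, ← hmapH, he]
      exact hcf'.lt.ne this
    · intro L hLn hKL hLH
      have hmapL : (L.map π).Normal := hLn.map π hsurj
      have h1 : K' ≤ L.map π := by rw [← hmapK]; exact Subgroup.map_mono hKL
      have h2 : L.map π ≤ H' := by rw [← hmapH]; exact Subgroup.map_mono hLH
      have hLeq : (L.map π).comap π = L := by
        rw [Subgroup.comap_map_eq]
        rw [hπ, QuotientGroup.ker_mk']
        exact sup_eq_left.mpr (le_trans hZH hKL)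
      rcases hcf'.isMax (L.map π) hmapL h1 h2 with h | h
      · left; rw [← hLeq, h]
      · right; rw [← hLeq, h]
  have hnc : ¬ (∀ h ∈ H, ∀ g : G, g * h * g⁻¹ * h⁻¹ ∈ K) := by
    intro hc
    apply hnc'
    intro h' hh' g'
    obtain ⟨h, rfl⟩ := hsurj h'
    obtain ⟨g, rfl⟩ := hsurj g'
    have : g * h * g⁻¹ * h⁻¹ ∈ K := hc h hh' g
    have h2 : π (g * h * g⁻¹ * h⁻¹) ∈ K' := this
    simpa [map_mul, map_inv] using h2
  obtain ⟨x, rfl⟩ := hsurj x'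
  obtain ⟨a, ha, hall⟩ := hG H K hcf hnc x
  refine ⟨π a, ha, fun c' hc' => ?_⟩
  obtain ⟨c, rfl⟩ := hsurj c'
  have : x * c * x⁻¹ * (a * c * a⁻¹)⁻¹ ∈ K := hall c hc'
  have h2 : π (x * c * x⁻¹ * (a * c * a⁻¹)⁻¹) ∈ K' := this
  simpa [map_mul, map_inv] using h2
end MyAux4
-- Aux batch 5 : passing to a centralizing complement factor
section MyAux5
open Subgroup

variable {Q : Type} [Group Q]

theorem my_ucs_factor (N C : Subgroup Q)
    (hcent : ∀ a ∈ N, ∀ c ∈ C, a * c = c * a)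
    (hdec : ∀ x : Q, ∃ c ∈ C, ∃ a ∈ N, x = c * a) :
    ∀ k (x : ↥C), x ∈ Subgroup.upperCentralSeries (↥C) k → (x : Q) ∈ Subgroup.upperCentralSeries Q k := by
  intro k
  induction k with
  | zero =>
    intro x hx
    have : x = 1 := hx
    rw [this]
    exact one_mem _
  | succ k ih =>
    intro x hx
    rw [Subgroup.mem_upperCentralSeries_succ_iff] at hx ⊢
    intro g
    obtain ⟨c, hc, a, ha, rfl⟩ := hdec g
    have h1 : a * (x : Q)⁻¹ = (x : Q)⁻¹ * a := hcent a ha _ (C.inv_mem x.2)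
    have he : (x : Q) * (c * a) * (x : Q)⁻¹ * (c * a)⁻¹ =
        (x : Q) * c * (x : Q)⁻¹ * c⁻¹ := by
      calc (x : Q) * (c * a) * (x : Q)⁻¹ * (c * a)⁻¹
          = (x : Q) * c * (a * (x : Q)⁻¹) * (a⁻¹ * c⁻¹) := by group
        _ = (x : Q) * c * ((x : Q)⁻¹ * a) * (a⁻¹ * c⁻¹) := by rw [h1]
        _ = (x : Q) * c * (x : Q)⁻¹ * c⁻¹ := by group
    rw [commutatorElement_def, he]
    have h2 := ih _ (hx (⟨c, hc⟩ : ↥C))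
    rw [commutatorElement_def] at h2
    have hco : ((x * ⟨c, hc⟩ * x⁻¹ * (⟨c, hc⟩ : ↥C)⁻¹ : ↥C) : Q)
        = (x : Q) * c * (x : Q)⁻¹ * c⁻¹ := by
      push_cast
      rfl
    rwa [hco] at h2

theorem my_hypercenter_factor (N C : Subgroup Q)
    (hcent : ∀ a ∈ N, ∀ c ∈ C, a * c = c * a)
    (hdec : ∀ x : Q, ∃ c ∈ C, ∃ a ∈ N, x = c * a)
    (hz : hypercenter Q = ⊥) : hypercenter (↥C) = ⊥ := by
  apply le_antisymm _ bot_le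
  intro x hx
  have hdir : Directed (· ≤ ·) (_root_.upperCentralSeries (↥C)) :=
    (Subgroup.upperCentralSeries_mono (↥C)).directed_le
  rw [hypercenter, Subgroup.mem_iSup_of_directed hdir] at hx
  obtain ⟨k, hk⟩ := hx
  have h1 : (x : Q) ∈ Subgroup.upperCentralSeries Q k := my_ucs_factor N C hcent hdec k x hk
  have h2 : (x : Q) ∈ hypercenter Q := le_iSup (Subgroup.upperCentralSeries Q) k h1
  rw [hz, Subgroup.mem_bot] at h2
  have : x = 1 := Subtype.ext h2
  rw [this]
  exact one_mem _

theorem my_quasinilpotent_factor [Finite Q]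
    (hq : QuasinilpotentMem Q) (N C : Subgroup Q) [hNn : N.Normal]
    (hcent : ∀ a ∈ N, ∀ c ∈ C, a * c = c * a)
    (hdec : ∀ x : Q, ∃ c ∈ C, ∃ a ∈ N, x = c * a)
    (hdisj : ∀ y : Q, y ∈ N → y ∈ C → y = 1) :
    QuasinilpotentMem ↥C := by
  have key : ∀ X' : Subgroup Q, X' ≤ C → ∀ y ∈ N ⊔ X', y ∈ C → y ∈ X' := by
    intro X' hX' y hy hyC
    obtain ⟨a, ha, z, hz, rfl⟩ := my_mem_sup_normal N X' hy
    have haC : a ∈ C := by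
      have : (a * z) * z⁻¹ ∈ C := mul_mem hyC (inv_mem (hX' hz))
      simpa using this
    have ha1 : a = 1 := hdisj a ha haC
    rw [ha1, one_mul]; exact hz
  intro H K hcf hnc x
  set H' := H.map C.subtype with hH'
  set K' := K.map C.subtype with hK'
  have hH'C : H' ≤ C := Subgroup.map_subtype_le H
  have hK'C : K' ≤ C := Subgroup.map_subtype_le K
  have hK'H' : K' ≤ H' := Subgroup.map_mono hcf.lt.le
  have hmemH' : ∀ {h : ↥C}, h ∈ H → (h : Q) ∈ H' := by
    intro h hh; exact ⟨h, hh, rfl⟩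
  have hmemK' : ∀ {h : ↥C}, h ∈ K → (h : Q) ∈ K' := by
    intro h hh; exact ⟨h, hh, rfl⟩
  have hbackK : ∀ {h : ↥C}, (h : Q) ∈ K' → h ∈ K := by
    intro h hh
    obtain ⟨k, hk, hky⟩ := hh
    have : k = h := Subtype.ext hky
    exact this ▸ hk
  have hbackH : ∀ {h : ↥C}, (h : Q) ∈ H' → h ∈ H := by
    intro h hh
    obtain ⟨k, hk, hky⟩ := hh
    have : k = h := Subtype.ext hky
    exact this ▸ hk
  have hconj : ∀ (X : Subgroup ↥C), X.Normal → ∀ c ∈ C, ∀ y ∈ X.map C.subtype,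
      c * y * c⁻¹ ∈ X.map C.subtype := by
    intro X hXn c hc y hy
    obtain ⟨y0, hy0, rfl⟩ := hy
    exact ⟨(⟨c, hc⟩ : ↥C) * y0 * (⟨c, hc⟩ : ↥C)⁻¹, hXn.conj_mem y0 hy0 _, rfl⟩
  have hsupnorm : ∀ (X : Subgroup ↥C), X.Normal → (N ⊔ X.map C.subtype).Normal := by
    intro X hXn
    constructor
    intro w hw g
    obtain ⟨a, ha, h, hh, rfl⟩ := my_mem_sup_normal N (X.map C.subtype) hw
    obtain ⟨c, hc, a0, ha0, rfl⟩ := hdec g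
    have hhC : h ∈ C := Subgroup.map_subtype_le X hh
    have hch : c * h * c⁻¹ ∈ X.map C.subtype := hconj X hXn c hc h hh
    have hn1 : a0 * a * a0⁻¹ ∈ N := hNn.conj_mem a ha a0
    have he : (c * a0) * (a * h) * (c * a0)⁻¹ =
        (a0 * a * a0⁻¹) * (c * h * c⁻¹) := by
      have h1 : a0 * h = h * a0 := hcent a0 ha0 h hhC
      have h2 : (a0 * a * a0⁻¹) * c = c * (a0 * a * a0⁻¹) := hcent _ hn1 c hc
      calc (c * a0) * (a * h) * (c * a0)⁻¹
          = c * ((a0 * a * a0⁻¹) * (a0 * h * a0⁻¹)) * c⁻¹ := by group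
        _ = c * ((a0 * a * a0⁻¹) * (h * a0 * a0⁻¹)) * c⁻¹ := by rw [h1]
        _ = c * (a0 * a * a0⁻¹) * h * c⁻¹ := by group
        _ = ((a0 * a * a0⁻¹) * c) * h * c⁻¹ := by rw [← h2]
        _ = (a0 * a * a0⁻¹) * (c * h * c⁻¹) := by group
    rw [he]
    exact mul_mem ((le_sup_left : N ≤ _) hn1)
      ((le_sup_right : X.map C.subtype ≤ _) hch)
  haveI hHN : (N ⊔ H').Normal := hsupnorm H hcf.normalH
  haveI hKN : (N ⊔ K').Normal := hsupnorm K hcf.normalK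
  have hchief : IsChiefFactor Q (N ⊔ H') (N ⊔ K') := by
    refine ⟨hHN, hKN, ?_, ?_⟩
    · refine lt_of_le_of_ne (sup_le_sup_left hK'H' N) ?_
      intro he
      obtain ⟨h0, hh0, hh0K⟩ := SetLike.exists_of_lt hcf.lt
      have h1 : (h0 : Q) ∈ N ⊔ H' := (le_sup_right : H' ≤ _) (hmemH' hh0)
      rw [← he] at h1
      exact hh0K (hbackK (key K' hK'C _ h1 h0.2))
    · intro L hLn hKL hLH
      set L0 := L.subgroupOf C with hL0
      haveI hL0n : L0.Normal := by
        constructor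
        rintro n hn g
        simp only [hL0, Subgroup.mem_subgroupOf] at hn ⊢
        exact hLn.conj_mem _ hn _
      have hKL0 : K ≤ L0 := by
        intro k hk
        simp only [hL0, Subgroup.mem_subgroupOf]
        exact hKL ((le_sup_right : K' ≤ _) (hmemK' hk))
      have hL0H : L0 ≤ H := by
        intro y hy
        have h1 : (y : Q) ∈ L := hy
        exact hbackH (key H' hH'C _ (hLH h1) y.2)
      have hLdec : L = N ⊔ (L0.map C.subtype) := by
        apply le_antisymm
        · intro w hw
          obtain ⟨a, ha, z, hz, rfl⟩ := my_mem_sup_normal N H' (hLH hw)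
          have haL : a ∈ L := hKL ((le_sup_left : N ≤ _) ha)
          have hzL : z ∈ L := by
            have : a⁻¹ * (a * z) ∈ L := mul_mem (inv_mem haL) hw
            simpa using this
          have hzC : z ∈ C := hH'C hz
          refine mul_mem ((le_sup_left : N ≤ _) ha)
            ((le_sup_right : L0.map C.subtype ≤ _) ?_)
          exact ⟨⟨z, hzC⟩, hzL, rfl⟩
        · apply sup_le
          · exact le_trans le_sup_left hKL
          · intro w hw
            obtain ⟨y, hy, rfl⟩ := hw
            exact hy
      rcases hcf.isMax L0 hL0n hKL0 hL0H with h | h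
      · left; rw [hLdec, h]
      · right; rw [hLdec, h]
  have hnc2 : ¬ (∀ h ∈ N ⊔ H', ∀ g : Q, g * h * g⁻¹ * h⁻¹ ∈ N ⊔ K') := by
    intro hcen
    apply hnc
    intro h hh g
    have h1 : (g : Q) * (h : Q) * (g : Q)⁻¹ * (h : Q)⁻¹ ∈ N ⊔ K' :=
      hcen (h : Q) ((le_sup_right : H' ≤ _) (hmemH' hh)) (g : Q)
    have hco : ((g * h * g⁻¹ * h⁻¹ : ↥C) : Q)
        = (g : Q) * (h : Q) * (g : Q)⁻¹ * (h : Q)⁻¹ := by push_cast; rfl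
    have h3 : ((g * h * g⁻¹ * h⁻¹ : ↥C) : Q) ∈ K' :=
      key K' hK'C _ (by rw [hco]; exact h1) (g * h * g⁻¹ * h⁻¹ : ↥C).2
    exact hbackK h3
  obtain ⟨α, hα, hall⟩ := hq (N ⊔ H') (N ⊔ K') hchief hnc2 (x : Q)
  obtain ⟨a, ha, h0q, hh0q, hα2⟩ := my_mem_sup_normal N H' hα
  obtain ⟨h0, hh0, rfl⟩ := hh0q
  refine ⟨h0, hh0, fun c hc => ?_⟩
  have h1 := hall (c : Q) ((le_sup_right : H' ≤ _) (hmemH' hc))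
  rw [hα2] at h1
  have he : (a * (C.subtype h0)) * (c : Q) * (a * (C.subtype h0))⁻¹ =
      (h0 : Q) * (c : Q) * (h0 : Q)⁻¹ := by
    have h2 : a * ((h0 : Q) * (c : Q) * (h0 : Q)⁻¹) =
        ((h0 : Q) * (c : Q) * (h0 : Q)⁻¹) * a :=
      hcent a ha _ (mul_mem (mul_mem h0.2 c.2) (inv_mem h0.2))
    calc (a * (C.subtype h0)) * (c : Q) * (a * (C.subtype h0))⁻¹
        = a * ((h0 : Q) * (c : Q) * (h0 : Q)⁻¹) * a⁻¹ := by
          simp only [Subgroup.coe_subtype]; group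
      _ = ((h0 : Q) * (c : Q) * (h0 : Q)⁻¹) * a * a⁻¹ := by rw [h2]
      _ = (h0 : Q) * (c : Q) * (h0 : Q)⁻¹ := by group
  rw [he] at h1
  have hco : ((x * c * x⁻¹ * (h0 * c * h0⁻¹)⁻¹ : ↥C) : Q)
      = (x : Q) * (c : Q) * (x : Q)⁻¹ * ((h0 : Q) * (c : Q) * (h0 : Q)⁻¹)⁻¹ := by
    push_cast; rfl
  have h3 : ((x * c * x⁻¹ * (h0 * c * h0⁻¹)⁻¹ : ↥C) : Q) ∈ K' :=
    key K' hK'C _ (by rw [hco]; exact h1) (x * c * x⁻¹ * (h0 * c * h0⁻¹)⁻¹ : ↥C).2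
  exact hbackK h3
end MyAux5
-- Aux batch 6 : the main induction
section MyAux6
open Subgroup

theorem my_semisimple_induction : ∀ n : ℕ, ∀ (Q : Type) [Group Q] [Finite Q],
    Nat.card Q ≤ n → QuasinilpotentMem Q → hypercenter Q = ⊥ → IsSemisimpleGroup Q := by
  intro n
  induction n with
  | zero =>
    intro Q _ _ hcard _ _
    exfalso
    have := Nat.card_pos (α := Q)
    omega
  | succ n ih =>
    intro Q _ _ hcard hq hz
    by_cases htriv : ∀ x : Q, x = 1
    · refine ⟨Empty, fun i => i.elim, ⟨fun i => i.elim, ?_, fun i => i.elim,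
        fun i => i.elim⟩, fun i => i.elim⟩
      apply le_antisymm le_top
      intro x _
      have : x = 1 := htriv x
      rw [this]; exact one_mem _
    · push_neg at htriv
      obtain ⟨x0, hx0⟩ := htriv
      haveI : Nontrivial Q := ⟨⟨x0, 1, hx0⟩⟩
      -- minimal normal subgroup
      set s : Set ℕ := {k | ∃ N : Subgroup Q, (N.Normal ∧ N ≠ ⊥) ∧ Nat.card N = k} with hs
      have hne : s.Nonempty := ⟨Nat.card (⊤ : Subgroup Q), ⊤, ⟨inferInstance, bot_ne_top.symm⟩, rfl⟩
      obtain ⟨N, ⟨hNnorm, hNne⟩, hNcard⟩ := Nat.sInf_mem hne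
      haveI := hNnorm
      have hmin : ∀ L : Subgroup Q, L.Normal → L ≤ N → L = ⊥ ∨ L = N := by
        intro L hLn hLN
        by_cases hLbot : L = ⊥
        · exact Or.inl hLbot
        · right
          have h1 : Nat.card N ≤ Nat.card L := by
            rw [hNcard]
            exact Nat.sInf_le ⟨L, ⟨hLn, hLbot⟩, rfl⟩
          exact Subgroup.eq_of_le_of_card_ge hLN h1
      have hchief : IsChiefFactor Q N ⊥ :=
        ⟨hNnorm, inferInstance, bot_lt_iff_ne_bot.mpr hNne,
          fun L hLn _ hLN => hmin L hLn hLN⟩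
      have hncN : ¬ (∀ h ∈ N, ∀ g : Q, g * h * g⁻¹ * h⁻¹ ∈ (⊥ : Subgroup Q)) := by
        intro hcen
        apply hNne
        have hcen2 : N ≤ Subgroup.center Q := by
          intro h hh
          rw [Subgroup.mem_center_iff]
          intro g
          have h1 := hcen h hh g
          rw [Subgroup.mem_bot] at h1
          have e1 : (g * h) * (h * g)⁻¹ = 1 := by
            have : (g * h) * (h * g)⁻¹ = g * h * g⁻¹ * h⁻¹ := by group
            rw [this]; exact h1
          exact mul_inv_eq_one.mp e1
        exact le_antisymm
          (le_trans hcen2 (le_trans (my_center_le_hypercenter Q) (le_of_eq hz))) bot_le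
      have hact : ∀ x : Q, ∃ a ∈ N, ∀ c ∈ N, x * c * x⁻¹ = a * c * a⁻¹ := by
        intro x
        obtain ⟨a, ha, hall⟩ := hq N ⊥ hchief hncN x
        refine ⟨a, ha, fun c hc => ?_⟩
        have h1 := hall c hc
        rw [Subgroup.mem_bot] at h1
        exact mul_inv_eq_one.mp h1
      set C := Subgroup.centralizer (N : Set Q) with hC
      have hcent : ∀ a ∈ N, ∀ c ∈ C, a * c = c * a := by
        intro a ha c hc
        exact Subgroup.mem_centralizer_iff.mp hc a ha
      have hdec : ∀ x : Q, ∃ c ∈ C, ∃ a ∈ N, x = c * a := by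
        intro x
        obtain ⟨a, ha, hax⟩ := hact x
        refine ⟨x * a⁻¹, ?_, a, ha, by group⟩
        rw [Subgroup.mem_centralizer_iff]
        intro u hu
        have hu' : a⁻¹ * u * a ∈ N := by
          have := hNnorm.conj_mem u hu a⁻¹
          simpa using this
        have h1 := hax (a⁻¹ * u * a) hu'
        have h2 : a * (a⁻¹ * u * a) * a⁻¹ = u := by group
        rw [h2] at h1
        have h4 : (x * a⁻¹) * u = x * (a⁻¹ * u * a) * x⁻¹ * (x * a⁻¹) := by group
        rw [h4, h1]
      have hCn : C.Normal := by
        constructor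
        intro c hc g
        rw [Subgroup.mem_centralizer_iff]
        intro u hu
        have h1 : g⁻¹ * u * g ∈ N := by
          have := hNnorm.conj_mem u hu g⁻¹
          simpa using this
        have h2 := Subgroup.mem_centralizer_iff.mp hc _ h1
        calc u * (g * c * g⁻¹) = g * ((g⁻¹ * u * g) * c) * g⁻¹ := by group
          _ = g * (c * (g⁻¹ * u * g)) * g⁻¹ := by rw [h2]
          _ = (g * c * g⁻¹) * u := by group
      haveI := hCn
      have hdisj : ∀ y : Q, y ∈ N → y ∈ C → y = 1 := by
        rcases hmin (N ⊓ C) inferInstance inf_le_left with hb | hn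
        · intro y hyN hyC
          have : y ∈ N ⊓ C := ⟨hyN, hyC⟩
          rw [hb] at this
          exact this
        · exfalso
          have hNsubC : N ≤ C := inf_eq_left.mp hn
          apply hNne
          have hcen2 : N ≤ Subgroup.center Q := by
            intro h hh
            rw [Subgroup.mem_center_iff]
            intro g
            obtain ⟨c, hc, a, ha, rfl⟩ := hdec g
            have h1 : h * c = c * h := hcent h hh c hc
            have h2 : h * a = a * h := hcent h hh a (hNsubC ha)
            calc c * a * h = c * (a * h) := by group
              _ = c * (h * a) := by rw [← h2]
              _ = (c * h) * a := by group
              _ = (h * c) * a := by rw [← h1]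
              _ = h * (c * a) := by group
          exact le_antisymm
            (le_trans hcen2 (le_trans (my_center_le_hypercenter Q) (le_of_eq hz))) bot_le
      have hNelt : ∃ y : Q, y ∈ N ∧ y ≠ 1 := by
        by_contra hcon
        push_neg at hcon
        apply hNne
        apply le_antisymm _ bot_le
        intro y hy
        rw [Subgroup.mem_bot]
        exact hcon y hy
      haveI hNnontriv : Nontrivial ↥N := by
        obtain ⟨y, hy, hy1⟩ := hNelt
        exact ⟨⟨⟨y, hy⟩, 1, fun he => hy1 (congrArg Subtype.val he)⟩⟩
      have hNsimple : IsSimpleGroup ↥N := by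
        constructor
        intro U hU
        have hU'norm : (U.map N.subtype).Normal := by
          constructor
          intro u hu g
          obtain ⟨c, hc, a, ha, rfl⟩ := hdec g
          obtain ⟨u0, hu0, rfl⟩ := hu
          have h1 : (⟨a, ha⟩ : ↥N) * u0 * (⟨a, ha⟩ : ↥N)⁻¹ ∈ U := hU.conj_mem u0 hu0 _
          have h2 : a * (N.subtype u0) * a⁻¹ ∈ U.map N.subtype := ⟨_, h1, rfl⟩
          have h3 : (a * (N.subtype u0) * a⁻¹) * c = c * (a * N.subtype u0 * a⁻¹) :=
            hcent _ (hNnorm.conj_mem _ u0.2 a) c hc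
          have he : (c * a) * (N.subtype u0) * (c * a)⁻¹ = a * (N.subtype u0) * a⁻¹ := by
            calc (c * a) * (N.subtype u0) * (c * a)⁻¹
                = c * (a * (N.subtype u0) * a⁻¹) * c⁻¹ := by group
              _ = ((a * (N.subtype u0) * a⁻¹) * c) * c⁻¹ := by rw [← h3]
              _ = a * (N.subtype u0) * a⁻¹ := by group
          rw [he]
          exact h2
        rcases hmin (U.map N.subtype) hU'norm (Subgroup.map_subtype_le U) with hb | ht
        · left
          apply Subgroup.map_injective N.subtype_injective
          rw [hb, Subgroup.map_bot]
        · right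
          apply Subgroup.map_injective N.subtype_injective
          rw [ht, ← MonoidHom.range_eq_map, Subgroup.range_subtype]
      have hNnonab : ¬ (∀ x y : ↥N, x * y = y * x) := by
        intro hab
        have hsubC : N ≤ C := by
          intro a ha
          rw [Subgroup.mem_centralizer_iff]
          intro u hu
          exact congrArg Subtype.val (hab ⟨u, hu⟩ ⟨a, ha⟩)
        obtain ⟨y, hy, hy1⟩ := hNelt
        exact hy1 (hdisj y hy (hsubC hy))
      have hCcard : Nat.card ↥C < Nat.card Q := by
        have hle : Nat.card ↥C ≤ Nat.card Q := by
          calc Nat.card ↥C ≤ Nat.card (⊤ : Subgroup Q) := Subgroup.card_le_of_le le_top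
            _ = Nat.card Q := Subgroup.card_top
        rcases lt_or_eq_of_le hle with h | h
        · exact h
        · exfalso
          have hCtop : C = ⊤ := by
            apply Subgroup.eq_of_le_of_card_ge le_top
            rw [Subgroup.card_top, h]
          obtain ⟨y, hy, hy1⟩ := hNelt
          exact hy1 (hdisj y hy (by rw [hCtop]; trivial))
      have hCq : QuasinilpotentMem ↥C := my_quasinilpotent_factor hq N C hcent hdec hdisj
      have hCz : hypercenter ↥C = ⊥ := my_hypercenter_factor N C hcent hdec hz
      have hCss : IsSemisimpleGroup ↥C := ih ↥C (by omega) hCq hCz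
      obtain ⟨ι, S, hp, hsim⟩ := hCss
      set T : Option ι → Subgroup Q :=
        fun o => o.elim N (fun i => (S i).map C.subtype) with hT
      have hTc : ∀ i, T (some i) = (S i).map C.subtype := fun i => rfl
      have hTn : T none = N := rfl
      have hCsup : (⨆ i : ι, (S i).map C.subtype) = C := by
        rw [← Subgroup.map_iSup, hp.sup, ← MonoidHom.range_eq_map, Subgroup.range_subtype]
      refine ⟨Option ι, T, ⟨fun i => le_top, ?_, ?_, ?_⟩, ?_⟩
      · -- sup
        apply le_antisymm le_top
        intro x _
        obtain ⟨c, hc, a, ha, rfl⟩ := hdec x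
        have hN' : N ≤ ⨆ o, T o := le_iSup T none
        have hC' : C ≤ ⨆ o, T o := by
          rw [← hCsup]
          exact iSup_le fun i => le_iSup T (some i)
        exact mul_mem (hC' hc) (hN' ha)
      · -- comm
        intro i j hij x hx y hy
        cases i with
        | none =>
          cases j with
          | none => exact absurd rfl hij
          | some j => exact hcent x hx y (Subgroup.map_subtype_le _ hy)
        | some i =>
          cases j with
          | none => exact (hcent y hy x (Subgroup.map_subtype_le _ hx)).symm
          | some j =>
            obtain ⟨x0, hx0, rfl⟩ := hx
            obtain ⟨y0, hy0, rfl⟩ := hy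
            have hij' : i ≠ j := fun h => hij (by rw [h])
            have h1 := hp.comm i j hij' x0 hx0 y0 hy0
            have h2 := congrArg C.subtype h1
            simpa [map_mul] using h2
      · -- indep
        intro o
        cases o with
        | none =>
          have hsub : (⨆ j ∈ ({(none : Option ι)}ᶜ : Set (Option ι)), T j) ≤ C := by
            apply iSup_le; intro j; apply iSup_le; intro hj
            cases j with
            | none => simp at hj
            | some j => exact Subgroup.map_subtype_le _
          rw [Subgroup.disjoint_def]
          intro x hxN hxS
          exact hdisj x hxN (hsub hxS)
        | some i =>
          set E := ⨆ j ∈ ({i}ᶜ : Set ι), (S j).map C.subtype with hE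
          have hEC : E ≤ C := by
            apply iSup_le; intro j; apply iSup_le; intro hj
            exact Subgroup.map_subtype_le _
          have hsub : (⨆ j ∈ ({(some i : Option ι)}ᶜ : Set (Option ι)), T j) ≤ N ⊔ E := by
            apply iSup_le; intro j; apply iSup_le; intro hj
            cases j with
            | none => exact le_sup_left
            | some j' =>
              have hji : j' ∈ ({i}ᶜ : Set ι) := by
                simp only [Set.mem_compl_iff, Set.mem_singleton_iff]
                intro h
                exact (by simpa using hj : (some j' : Option ι) ≠ some i) (by rw [h])
              exact le_trans (le_iSup₂ (f := fun j _ => (S j).map C.subtype) j' hji)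
                le_sup_right
          rw [Subgroup.disjoint_def]
          intro x hxT hxS
          have hx1 : x ∈ N ⊔ E := hsub hxS
          have hxC : x ∈ C := Subgroup.map_subtype_le _ hxT
          obtain ⟨a, ha, z, hzE, rfl⟩ := my_mem_sup_normal N E hx1
          have haC : a ∈ C := by
            have : (a * z) * z⁻¹ ∈ C := mul_mem hxC (inv_mem (hEC hzE))
            simpa using this
          have ha1 : a = 1 := hdisj a ha haC
          rw [ha1, one_mul] at hxT ⊢
          obtain ⟨z0, hz0, rfl⟩ := hxT
          have hEeq : E = (⨆ j ∈ ({i}ᶜ : Set ι), S j).map C.subtype := by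
            rw [hE, Subgroup.map_iSup]
            exact iSup_congr fun j => (Subgroup.map_iSup _ _).symm
          rw [hEeq] at hzE
          obtain ⟨z1, hz1, hz1e⟩ := hzE
          have hzz : z1 = z0 := C.subtype_injective hz1e
          have hz0' : z0 ∈ ⨆ j ∈ ({i}ᶜ : Set ι), S j := hzz ▸ hz1
          have hone : z0 = 1 := Subgroup.disjoint_def.mp (hp.indep i) hz0 hz0'
          rw [hone]
          exact map_one C.subtype
      · -- simple and nonabelian
        intro o
        cases o with
        | none => exact ⟨hNsimple, hNnonab⟩
        | some i =>
          rw [hTc i]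
          haveI := (hsim i).1
          have e : ↥(S i) ≃* ↥((S i).map C.subtype) :=
            Subgroup.equivMapOfInjective (S i) C.subtype C.subtype_injective
          haveI : Nontrivial ↥((S i).map C.subtype) := e.symm.toEquiv.nontrivial
          constructor
          · exact IsSimpleGroup.isSimpleGroup_of_surjective e.toMonoidHom e.surjective
          · intro hab
            apply (hsim i).2
            intro x y
            have h1 := hab ⟨C.subtype x, Subgroup.mem_map_of_mem _ x.2⟩
              ⟨C.subtype y, Subgroup.mem_map_of_mem _ y.2⟩
            have h2 : (C.subtype (x : ↥C)) * (C.subtype (y : ↥C))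
                = (C.subtype (y : ↥C)) * (C.subtype (x : ↥C)) :=
              congrArg Subtype.val h1
            refine Subtype.ext (C.subtype_injective ?_)
            have hxy : ((x * y : ↥(S i)) : ↥C) = (x : ↥C) * (y : ↥C) := rfl
            have hyx : ((y * x : ↥(S i)) : ↥C) = (y : ↥C) * (x : ↥C) := rfl
            rw [hxy, hyx, map_mul, map_mul]
            exact h2
end MyAux6


/-- a group `G` is quasinilpotent if and only if `G/Z_∞(G)` is
semisimple. -/
theorem quasinilpotent_iff_semisimple_quotient
    (G : Type) [Group G] [Finite G] :
    QuasinilpotentMem G ↔ IsSemisimpleGroup (G ⧸ hypercenter G) := by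
  constructor
  · intro hq
    haveI : (hypercenter G).Normal := hypercenter_normal G
    have h1 : QuasinilpotentMem (G ⧸ hypercenter G) :=
      my_quasinilpotent_quotient G (hypercenter G) hq
    have h2 : hypercenter (G ⧸ hypercenter G) = ⊥ := my_hypercenter_quotient G
    exact my_semisimple_induction (Nat.card (G ⧸ hypercenter G)) (G ⧸ hypercenter G)
      le_rfl h1 h2
  · exact my_quasinilpotent_of_semisimple G
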